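/- (Corollary 3.4) Let W^N = U(𝔫̄)/U(𝔫̄)𝔫̄₊, a left U(𝔫̄)-module, and let v = 1 + U(𝔫̄)𝔫̄₊ ∈ W^N (the principal subspace of the generalized Verma module, with the spaces W^N(λ_i) identified as U(𝔫̄)-modules). Then for every i = 1, …, l and every character ν : Q → ℂ^×, there is a unique ℂ-linear map ê : W^N → W^N such that ê(a · v) = τ_{λ_i,ν}(a) · v for all a ∈ U(𝔫̄₋), and this map satisfies ê(I_{λ_0} · v) ⊆ I_{λ_i} · v. -/

import Mathlib

/-- The data of a finite-dimensional complex simple Lie algebra `𝔤` of type `A`, `D` or `E`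
of rank `l`, recorded through: its Cartan matrix `M`; its set `Δ` of positive roots, each
written via its coordinates in the basis of simple roots (so the `i`-th simple root is
`Pi.single i 1`); and the affinization `𝔫̄ = 𝔫 ⊗ ℂ[t,t⁻¹]` of the nilpotent subalgebra
`𝔫 = ⊕_{α ∈ Δ} ℂx_α`, where `x α m` stands for `x_α ⊗ t^m`.  The weight lattice `P` is
identified with `ℤ^l` via `λ ↦ (⟨λ, α_j⟩)_j`, so that `⟨λ, α⟩ = ∑_j ⟨λ, α_j⟩ α^j` for a
positive root `α` with simple-root coordinates `α^j`; in particular `⟨λ_i, α⟩ = α^i` and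
`⟨α_i, α⟩ = ∑_j m_{ij} α^j`. -/
structure ADEContext where
  /-- the rank -/
  l : ℕ
  hl : 0 < l
  /-- the Cartan matrix -/
  M : Matrix (Fin l) (Fin l) ℤ
  M_symm : M.IsSymm
  M_diag : ∀ i, M i i = 2
  M_offdiag : ∀ i j, i ≠ j → M i j = 0 ∨ M i j = -1
  M_posdef : (M.map ((↑) : ℤ → ℝ)).PosDef
  /-- the set of positive roots, in simple-root coordinates -/
  Δ : Finset (Fin l → ℤ)
  Δ_nonneg : ∀ α ∈ Δ, ∀ j, 0 ≤ α j
  Δ_ne_zero : ∀ α ∈ Δ, α ≠ 0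
  simple_mem : ∀ i : Fin l, (Pi.single i 1 : Fin l → ℤ) ∈ Δ
  /-- every nonsimple positive root is a positive root plus a simple root -/
  Δ_decomp : ∀ α ∈ Δ, (∀ i : Fin l, α ≠ Pi.single i 1) →
    ∃ β ∈ Δ, ∃ i : Fin l, α = β + Pi.single i 1
  /-- `α_i + α_j` is a root iff `i ≠ j` and `m_{ij} = -1` (simply-laced types) -/
  sum_simple_mem_iff : ∀ i j : Fin l,
    ((Pi.single i 1 + Pi.single j 1 : Fin l → ℤ) ∈ Δ) ↔ (i ≠ j ∧ M i j = -1)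
  /-- `2α_i + α_j` is never a root (simply-laced types) -/
  two_simple_add_not_mem : ∀ i j : Fin l,
    ((2 : ℤ) • (Pi.single i 1 : Fin l → ℤ) + Pi.single j 1) ∉ Δ
  /-- the underlying type of the affinization `𝔫̄ = 𝔫 ⊗ ℂ[t,t⁻¹]` -/
  nbar : Type
  [instLieRing : LieRing nbar]
  [instLieAlgebra : LieAlgebra ℂ nbar]
  /-- `x α m` is the element `x_α ⊗ t^m` of `𝔫̄` -/
  x : (Fin l → ℤ) → ℤ → nbar
  /-- the elements `x_α ⊗ t^m`, `α ∈ Δ`, `m ∈ ℤ`, form a `ℂ`-basis of `𝔫̄` -/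
  basis : Module.Basis ({α // α ∈ Δ} × ℤ) ℂ nbar
  basis_eq : ∀ (α : {α // α ∈ Δ}) (m : ℤ), basis (α, m) = x α.1 m
  /-- the structure constants: `[x_α, x_β] = C_{α,β} x_{α+β}` -/
  C : (Fin l → ℤ) → (Fin l → ℤ) → ℂ
  C_ne_zero : ∀ α ∈ Δ, ∀ β ∈ Δ, α + β ∈ Δ → C α β ≠ 0
  /-- the bracket `[x ⊗ t^m, y ⊗ t^n] = [x,y] ⊗ t^{m+n}` on `𝔫̄` -/
  bracket_x : ∀ α ∈ Δ, ∀ β ∈ Δ, ∀ m n : ℤ,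
    ⁅x α m, x β n⁆ = if α + β ∈ Δ then C α β • x (α + β) (m + n) else 0

attribute [instance] ADEContext.instLieRing ADEContext.instLieAlgebra

namespace ADEContext

variable (ctx : ADEContext)

/-- the universal enveloping algebra `U(𝔫̄)` -/
abbrev U : Type := UniversalEnvelopingAlgebra ℂ ctx.nbar

/-- the element `x_α(m) = x_α ⊗ t^m`, viewed in `U(𝔫̄)` -/
noncomputable def X (α : Fin ctx.l → ℤ) (m : ℤ) : ctx.U :=
  UniversalEnvelopingAlgebra.ι ℂ (ctx.x α m)

/-- the `i`-th simple root `α_i`, in simple-root coordinates -/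
def sroot (i : Fin ctx.l) : Fin ctx.l → ℤ := Pi.single i 1

/-- the left ideal `U(𝔫̄)𝔫̄₊` of `U(𝔫̄)` generated by `𝔫̄₊ = 𝔫 ⊗ ℂ[t]` (equivalently, by the
elements `x_α(m)`, `α ∈ Δ`, `m ≥ 0`, which span `𝔫̄₊`) -/
noncomputable def Uplus : Submodule ctx.U ctx.U :=
  Submodule.span ctx.U {u | ∃ α ∈ ctx.Δ, ∃ m : ℤ, 0 ≤ m ∧ u = ctx.X α m}

/-- the truncated relation `R^j_{-1,t} = ∑_{m₁,m₂ ≤ -1, m₁+m₂=-t} x_{α_j}(m₁)x_{α_j}(m₂)` -/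
noncomputable def R (j : Fin ctx.l) (t : ℤ) : ctx.U :=
  ∑ m ∈ Finset.Icc (1 - t) (-1 : ℤ), ctx.X (ctx.sroot j) m * ctx.X (ctx.sroot j) (-t - m)

/-- the left ideal `J` of `U(𝔫̄)` generated by the `R^j_{-1,t}`, `j = 1, …, l`, `t ≥ 2` -/
noncomputable def Jideal : Submodule ctx.U ctx.U :=
  Submodule.span ctx.U {u | ∃ j : Fin ctx.l, ∃ t : ℤ, 2 ≤ t ∧ u = ctx.R j t}

/-- the left ideal `I_{λ_0} = J + U(𝔫̄)𝔫̄₊` -/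
noncomputable def I0 : Submodule ctx.U ctx.U := ctx.Jideal ⊔ ctx.Uplus

/-- the left ideal `I_{λ_i} = I_{λ_0} + U(𝔫̄)x_{α_i}(-1)`, `i = 1, …, l` -/
noncomputable def Ii (i : Fin ctx.l) : Submodule ctx.U ctx.U :=
  ctx.I0 ⊔ Submodule.span ctx.U {ctx.X (ctx.sroot i) (-1)}

/-- the value `ν(α) = ∏_j ν_j^{α^j}` on `α ∈ Q` of the character `ν : Q → ℂ^×` determined by
`ν(α_j) = ν_j = νu j` -/
def charVal (νu : Fin ctx.l → ℂˣ) (α : Fin ctx.l → ℤ) : ℂ :=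
  (∏ j, (νu j) ^ (α j) : ℂˣ)

end ADEContext

/-!
By PBW for the splitting `𝔫̄ = 𝔫̄₋ ⊕ 𝔫̄₊` into two Lie subalgebras, `U(𝔫̄) = U(𝔫̄₋) ⊕ U(𝔫̄)𝔫̄₊`,
so `a ↦ a · v` is a linear isomorphism from `U(𝔫̄₋)` onto `W^N`; hence `ê` exists and is unique,
namely `a · v ↦ τ(a) · v`. The sum is all of `U(𝔫̄)` because commuting a generator past a
monomial only produces brackets. It is direct because `U(𝔫̄)` acts on the induced module
`U(𝔫̄₋) ⊗ 1`, in which `𝔫̄₊` kills `1`, and `a ∈ U(𝔫̄₋)` is recovered from `a · 1`. Here `U(𝔫̄₋)` is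
modelled by a free algebra modulo the commutation relations of `𝔫̄₋`.

For `ê(I_{λ₀} · v) ⊆ I_{λᵢ} · v` it suffices that `τ` maps the generators of `I_{λ₀}` into
`I_{λᵢ}`. A mode `x_α(m)` with `m ≥ -⟨λᵢ, α⟩` lies in `I_{λᵢ}`: by induction on the height of `α`,
it is a multiple of a commutator `[x_β(m₁), x_{α_j}(m₂)]` with both factors in `I_{λᵢ}`, the
base case being `x_{α_i}(-1)`. And `τ(R^i_{-1,t})` is a multiple of `R^i_{-1,t+2}` minus the two
terms containing `x_{α_i}(-1)`.
-/

theorem Submodule.smul_mem_of_adjoin_eq_top {R A M : Type*} [CommSemiring R] [Semiring A]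
    [Algebra R A] [AddCommMonoid M] [Module R M] [Module A M] [IsScalarTower R A M] {s : Set A}
    (hs : Algebra.adjoin R s = ⊤) (p : Submodule R M) (h : ∀ a ∈ s, ∀ v ∈ p, a • v ∈ p)
    (a : A) {v : M} (hv : v ∈ p) : a • v ∈ p := by
  have ha : a ∈ Algebra.adjoin R s := hs ▸ Algebra.mem_top
  induction ha using Algebra.adjoin_induction generalizing v with
  | mem a ha => exact h a ha v hv
  | algebraMap r => rw [algebraMap_smul]; exact p.smul_mem r hv
  | add a b _ _ ha hb => rw [add_smul]; exact p.add_mem (ha hv) (hb hv)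
  | mul a b _ _ ha hb => rw [mul_smul]; exact ha (hb hv)

namespace Submodule

variable {R A M : Type*} [CommRing R] [Ring A] [Algebra R A] [AddCommGroup M] [Module R M]
  {B : Submodule R A} {P : Submodule A A}

noncomputable def liftQOfIsCompl (h : IsCompl B (P.restrictScalars R)) (f : A →ₗ[R] M) :
    A ⧸ P →ₗ[R] M :=
  (P.restrictScalars R).liftQ (f ∘ₗ B.projection _ h) fun x hx => by
    rw [LinearMap.mem_ker, LinearMap.comp_apply, projection_apply_of_mem_right h hx, map_zero]

theorem liftQOfIsCompl_mk (h : IsCompl B (P.restrictScalars R)) (f : A →ₗ[R] M) (u : A) :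
    liftQOfIsCompl h f (Quotient.mk u) = f (B.projection _ h u) :=
  rfl

theorem liftQOfIsCompl_mk_of_mem (h : IsCompl B (P.restrictScalars R)) (f : A →ₗ[R] M) {a : A}
    (ha : a ∈ B) : liftQOfIsCompl h f (Quotient.mk a) = f a := by
  rw [liftQOfIsCompl_mk, projection_apply_of_mem_left h ha]

theorem quotient_ext_of_codisjoint (h : Codisjoint B (P.restrictScalars R)) {g g' : A ⧸ P →ₗ[R] M}
    (hg : ∀ a ∈ B, g (Quotient.mk a) = g' (Quotient.mk a)) : g = g' := by
  refine LinearMap.ext fun w => ?_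
  induction w using Quotient.induction_on with | _ u
  have hu : u ∈ B ⊔ P.restrictScalars R := codisjoint_iff.1 h ▸ mem_top
  obtain ⟨a, ha, p, hp, rfl⟩ := mem_sup.1 hu
  rw [Quotient.mk_add, (Quotient.mk_eq_zero P).2 hp, add_zero]
  exact hg a ha

end Submodule

section
attribute [local instance] LieRing.ofAssociativeRing

namespace UniversalEnvelopingAlgebra

variable {R L I J : Type*} [CommRing R] [LieRing L] [LieAlgebra R L]

theorem adjoin_range_ι :
    Algebra.adjoin R (Set.range (ι R : L → UniversalEnvelopingAlgebra R L)) = ⊤ := by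
  rw [show Set.range (ι R : L → UniversalEnvelopingAlgebra R L) =
      mkAlgHom R L '' Set.range (TensorAlgebra.ι R) by rw [← Set.range_comp]; rfl,
    Algebra.adjoin_image, TensorAlgebra.adjoin_range_ι, Algebra.map_top, AlgHom.range_eq_top]
  exact RingCon.mkₐ_surjective _

theorem ι_mul_ι (x y : L) : ι R x * ι R y = ι R y * ι R x + ι R ⁅x, y⁆ := by
  rw [LieHom.map_lie, Ring.lie_def]; abel

theorem ι_mul_mem_adjoin_sup_span {s t : Set L} (hst : Submodule.span R (s ∪ t) = ⊤)
    {a : UniversalEnvelopingAlgebra R L} (ha : a ∈ Algebra.adjoin R (ι R '' s)) (x : L) :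
    ι R x * a ∈ Subalgebra.toSubmodule (Algebra.adjoin R (ι R '' s)) ⊔
      (Submodule.span (UniversalEnvelopingAlgebra R L) (ι R '' t)).restrictScalars R := by
  set A := Algebra.adjoin R (ι R '' s)
  set P := Submodule.span (UniversalEnvelopingAlgebra R L) (ι R '' t)
  set S := Subalgebra.toSubmodule A ⊔ P.restrictScalars R
  have ι_mem (x : L) : ι R x ∈ S := by
    have hx : x ∈ Submodule.span R (s ∪ t) := hst ▸ Submodule.mem_top
    induction hx using Submodule.span_induction with
    | mem x hx =>
      rcases hx with hx | hx
      · exact Submodule.mem_sup_left (Algebra.subset_adjoin ⟨x, hx, rfl⟩)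
      · exact Submodule.mem_sup_right (Submodule.subset_span ⟨x, hx, rfl⟩)
    | zero => simp
    | add x y _ _ hx hy => rw [map_add]; exact S.add_mem hx hy
    | smul r x _ hx => rw [map_smul]; exact S.smul_mem r hx
  have mul_mem {a w} (ha : a ∈ A) (hw : w ∈ S) : a * w ∈ S := by
    obtain ⟨a', ha', p, hp, rfl⟩ := Submodule.mem_sup.1 hw
    rw [mul_add]
    exact S.add_mem (Submodule.mem_sup_left (A.mul_mem ha ha'))
      (Submodule.mem_sup_right (P.smul_mem a hp))
  rw [← Subalgebra.mem_toSubmodule, Algebra.adjoin_eq_span] at ha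
  induction ha using Submodule.span_induction generalizing x with
  | mem a ha =>
    induction ha using Submonoid.closure_induction_left generalizing x with
    | one => rw [mul_one]; exact ι_mem x
    | mul_left y hy a _ ih =>
      obtain ⟨y, hy, rfl⟩ := hy
      rw [← mul_assoc, ι_mul_ι, add_mul, mul_assoc]
      exact S.add_mem (mul_mem (Algebra.subset_adjoin ⟨y, hy, rfl⟩) (ih x)) (ih _)
  | zero => simp
  | add a b _ _ ha hb => rw [mul_add]; exact S.add_mem (ha x) (hb x)
  | smul r a _ ha => rw [mul_smul_comm]; exact S.smul_mem r (ha x)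

theorem codisjoint_adjoin_span {s t : Set L} (hst : Submodule.span R (s ∪ t) = ⊤) :
    Codisjoint (Subalgebra.toSubmodule (Algebra.adjoin R (ι R '' s)))
      ((Submodule.span (UniversalEnvelopingAlgebra R L) (ι R '' t)).restrictScalars R) := by
  set P := Submodule.span (UniversalEnvelopingAlgebra R L) (ι R '' t)
  set S := Subalgebra.toSubmodule (Algebra.adjoin R (ι R '' s)) ⊔ P.restrictScalars R
  have hS : ∀ u ∈ Set.range (ι R : L → UniversalEnvelopingAlgebra R L), ∀ w ∈ S, u • w ∈ S := by
    rintro _ ⟨x, rfl⟩ w hw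
    obtain ⟨a, ha, p, hp, rfl⟩ := Submodule.mem_sup.1 hw
    rw [smul_eq_mul, mul_add]
    exact S.add_mem (ι_mul_mem_adjoin_sup_span hst ha x)
      (Submodule.mem_sup_right (P.smul_mem _ hp))
  rw [codisjoint_iff, Submodule.eq_top_iff']
  intro u
  have h := Submodule.smul_mem_of_adjoin_eq_top adjoin_range_ι S hS u
    (Submodule.mem_sup_left (Subalgebra.one_mem _) : (1 : UniversalEnvelopingAlgebra R L) ∈ S)
  rwa [smul_eq_mul, mul_one] at h

variable (b : Module.Basis (I ⊕ J) R L)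

noncomputable def negPart : L →ₗ[R] FreeAlgebra R I :=
  b.constr R (Sum.elim (FreeAlgebra.ι R) 0)

noncomputable def relator (i j : I) : FreeAlgebra R I :=
  FreeAlgebra.ι R i * FreeAlgebra.ι R j - FreeAlgebra.ι R j * FreeAlgebra.ι R i -
    negPart b ⁅b (.inl i), b (.inl j)⁆

noncomputable def relIdeal : Submodule (FreeAlgebra R I) (FreeAlgebra R I) :=
  Submodule.span _ {x | ∃ i j c, x = relator b i j * c}

/-- A model of `U(L₋)`, where `L₋` is spanned by `b ∘ inl`, on which `rep` below lets `L` act as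
on the induced module `U(L) ⊗_{U(L₊)} R`. -/
abbrev InducedModule := FreeAlgebra R I ⧸ relIdeal b

noncomputable def liftInduced {M : Type*} [AddCommGroup M] [Module R M]
    (f : FreeAlgebra R I →ₗ[R] M) (hf : ∀ x ∈ relIdeal b, f x = 0) :
    InducedModule b →ₗ[R] M :=
  ((relIdeal b).restrictScalars R).liftQ f hf

noncomputable def vacuum : InducedModule b := Submodule.Quotient.mk 1

theorem mk_eq_smul_vacuum (x : FreeAlgebra R I) :
    (Submodule.Quotient.mk x : InducedModule b) = x • vacuum b := by
  rw [vacuum, ← Submodule.Quotient.mk_smul, smul_eq_mul, mul_one]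

theorem InducedModule.eq_top_of_vacuum_mem {p : Submodule R (InducedModule b)}
    (hvac : vacuum b ∈ p) (hι : ∀ i : I, ∀ v ∈ p, FreeAlgebra.ι R i • v ∈ p) : p = ⊤ := by
  refine Submodule.eq_top_iff'.2 fun v => ?_
  induction v using Submodule.Quotient.induction_on with | _ x
  rw [mk_eq_smul_vacuum]
  exact Submodule.smul_mem_of_adjoin_eq_top (FreeAlgebra.adjoin_range_ι R I) p
    (by rintro _ ⟨i, rfl⟩; exact hι i) x hvac

/-- On maps `f : L → V` recording `ξ ↦ ξ · w`, this computes `ξ ↦ ξ · (y_i w)` by the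
commutation rule `ξ y_i = y_i ξ - [y_i, ξ]`, where `y_i = b (inl i)`. -/
noncomputable def actGen (i : I) : Module.End R (L →ₗ[R] InducedModule b) :=
  LinearMap.llcomp R L _ _ (Algebra.lsmul R R (InducedModule b) (FreeAlgebra.ι R i)) -
    LinearMap.lcomp R _ (LieAlgebra.ad R L (b (.inl i)))

@[simp] theorem actGen_apply (i : I) (f : L →ₗ[R] InducedModule b) (ξ : L) :
    actGen b i f ξ = FreeAlgebra.ι R i • f ξ - f ⁅b (.inl i), ξ⁆ :=
  rfl

noncomputable def actAlg : FreeAlgebra R I →ₐ[R] Module.End R (L →ₗ[R] InducedModule b) :=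
  FreeAlgebra.lift R (actGen b)

noncomputable def vacuumMap : L →ₗ[R] InducedModule b :=
  (relIdeal b).mkQ.restrictScalars R ∘ₗ negPart b

variable {b}

@[simp] theorem negPart_inl (i : I) : negPart b (b (.inl i)) = FreeAlgebra.ι R i := by
  simp [negPart]

@[simp] theorem negPart_inr (j : J) : negPart b (b (.inr j)) = 0 := by
  simp [negPart]

theorem negPart_eq_zero_of_mem_span_inr {η : L}
    (hη : η ∈ Submodule.span R (Set.range (b ∘ .inr))) : negPart b η = 0 := by
  refine (Submodule.span_le.2 ?_ : _ ≤ LinearMap.ker (negPart b)) hη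
  rintro _ ⟨j, rfl⟩
  simp

theorem lift_negPart {η : L} (hη : η ∈ Submodule.span R (Set.range (b ∘ .inl))) :
    FreeAlgebra.lift R (fun i => ι R (b (.inl i))) (negPart b η) = ι R η := by
  induction hη using Submodule.span_induction with
  | mem η hη => obtain ⟨i, rfl⟩ := hη; simp
  | zero => simp
  | add η η' _ _ hη hη' => rw [map_add, map_add, hη, hη', map_add]
  | smul r η _ hη => rw [map_smul, map_smul, hη, map_smul]

theorem relator_smul (i j : I) (v : InducedModule b) : relator b i j • v = 0 := by
  induction v using Submodule.Quotient.induction_on with | _ x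
  rw [← Submodule.Quotient.mk_smul, Submodule.Quotient.mk_eq_zero]
  exact Submodule.subset_span ⟨i, j, x, rfl⟩

theorem lie_inl_mem_span_inl
    (hneg : ∀ i j, ⁅b (.inl i), b (.inl j)⁆ ∈ Submodule.span R (Set.range (b ∘ .inl)))
    (i : I) {η : L} (hη : η ∈ Submodule.span R (Set.range (b ∘ .inl))) :
    ⁅b (.inl i), η⁆ ∈ Submodule.span R (Set.range (b ∘ .inl)) := by
  induction hη using Submodule.span_induction with
  | mem η hη => obtain ⟨j, rfl⟩ := hη; exact hneg i j
  | zero => simp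
  | add η η' _ _ hη hη' => rw [lie_add]; exact Submodule.add_mem _ hη hη'
  | smul r η _ hη => rw [lie_smul]; exact Submodule.smul_mem _ r hη

theorem ι_mul_negPart_smul (i : I) {η : L} (hη : η ∈ Submodule.span R (Set.range (b ∘ .inl)))
    (v : InducedModule b) :
    (FreeAlgebra.ι R i * negPart b η) • v =
      (negPart b η * FreeAlgebra.ι R i) • v + negPart b ⁅b (.inl i), η⁆ • v := by
  induction hη using Submodule.span_induction with
  | mem η hη =>
    obtain ⟨j, rfl⟩ := hη
    have h := relator_smul i j v
    rw [relator, sub_smul, sub_smul, sub_sub, sub_eq_zero] at h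
    simpa using h
  | zero => simp
  | add η η' _ _ hη hη' =>
    simp only [map_add, lie_add, mul_add, add_mul, add_smul, hη, hη']
    abel
  | smul r η _ hη =>
    rw [map_smul, lie_smul, map_smul, Algebra.smul_def, Algebra.smul_def, ← mul_assoc,
      ← Algebra.commutes, mul_assoc, mul_smul, hη]
    simp only [mul_assoc, mul_smul, smul_add]

theorem actAlg_negPart {η : L} (hη : η ∈ Submodule.span R (Set.range (b ∘ .inl)))
    (f : L →ₗ[R] InducedModule b) (ξ : L) :
    actAlg b (negPart b η) f ξ = negPart b η • f ξ - f ⁅η, ξ⁆ := by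
  induction hη using Submodule.span_induction with
  | mem η hη => obtain ⟨j, rfl⟩ := hη; simp [actAlg]
  | zero => simp
  | add η η' _ _ hη hη' =>
    simp only [map_add, add_lie, LinearMap.add_apply, hη, hη', add_smul]
    abel
  | smul r η _ hη =>
    simp only [map_smul, smul_lie, LinearMap.smul_apply, hη, smul_sub, smul_assoc]

theorem actAlg_relator
    (hneg : ∀ i j, ⁅b (.inl i), b (.inl j)⁆ ∈ Submodule.span R (Set.range (b ∘ .inl)))
    (i j : I) : actAlg b (relator b i j) = 0 := by
  ext f ξ
  have hrel := relator_smul i j (f ξ)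
  rw [relator, sub_smul, sub_smul, mul_smul, mul_smul] at hrel
  rw [relator, map_sub, LinearMap.sub_apply, LinearMap.sub_apply, actAlg_negPart (hneg i j),
    lie_lie, map_sub, LinearMap.zero_apply, LinearMap.zero_apply, ← hrel]
  simp only [map_mul, actAlg, FreeAlgebra.lift_ι_apply, Module.End.mul_apply,
    LinearMap.sub_apply, actGen_apply, map_sub, smul_sub]
  abel

theorem actAlg_eq_zero_of_mem
    (hneg : ∀ i j, ⁅b (.inl i), b (.inl j)⁆ ∈ Submodule.span R (Set.range (b ∘ .inl)))
    {x : FreeAlgebra R I} (hx : x ∈ relIdeal b) : actAlg b x = 0 := by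
  induction hx using Submodule.span_induction with
  | mem x hx => obtain ⟨i, j, c, rfl⟩ := hx; rw [map_mul, actAlg_relator hneg, zero_mul]
  | zero => exact map_zero _
  | add x y _ _ hx hy => rw [map_add, hx, hy, add_zero]
  | smul a x _ hx => rw [smul_eq_mul, map_mul, hx, mul_zero]

variable (b) in
noncomputable def repAux
    (hneg : ∀ i j, ⁅b (.inl i), b (.inl j)⁆ ∈ Submodule.span R (Set.range (b ∘ .inl))) :
    InducedModule b →ₗ[R] L →ₗ[R] InducedModule b :=
  liftInduced b (LinearMap.applyₗ (vacuumMap b) ∘ₗ (actAlg b).toLinearMap)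
    fun x hx => by simp [actAlg_eq_zero_of_mem hneg hx]

variable (b) in
noncomputable def rep
    (hneg : ∀ i j, ⁅b (.inl i), b (.inl j)⁆ ∈ Submodule.span R (Set.range (b ∘ .inl))) :
    L →ₗ[R] Module.End R (InducedModule b) :=
  (repAux b hneg).flip

theorem rep_smul
    (hneg : ∀ i j, ⁅b (.inl i), b (.inl j)⁆ ∈ Submodule.span R (Set.range (b ∘ .inl)))
    (ξ : L) (z : FreeAlgebra R I) (v : InducedModule b) :
    rep b hneg ξ (z • v) = actAlg b z (repAux b hneg v) ξ := by
  induction v using Submodule.Quotient.induction_on with | _ x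
  rw [← Submodule.Quotient.mk_smul, smul_eq_mul]
  exact congr($(map_mul (actAlg b) z x) (vacuumMap b) ξ)

theorem rep_vacuum
    (hneg : ∀ i j, ⁅b (.inl i), b (.inl j)⁆ ∈ Submodule.span R (Set.range (b ∘ .inl)))
    (ξ : L) : rep b hneg ξ (vacuum b) = negPart b ξ • vacuum b := by
  rw [← mk_eq_smul_vacuum]
  exact congr($(map_one (actAlg b)) (vacuumMap b) ξ)

theorem rep_inr_vacuum
    (hneg : ∀ i j, ⁅b (.inl i), b (.inl j)⁆ ∈ Submodule.span R (Set.range (b ∘ .inl)))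
    (j : J) : rep b hneg (b (.inr j)) (vacuum b) = 0 := by
  simp [rep_vacuum]

theorem rep_ι_smul
    (hneg : ∀ i j, ⁅b (.inl i), b (.inl j)⁆ ∈ Submodule.span R (Set.range (b ∘ .inl)))
    (ξ : L) (i : I) (v : InducedModule b) :
    rep b hneg ξ (FreeAlgebra.ι R i • v) =
      FreeAlgebra.ι R i • rep b hneg ξ v - rep b hneg ⁅b (.inl i), ξ⁆ v := by
  rw [rep_smul, actAlg, FreeAlgebra.lift_ι_apply, actGen_apply]
  rfl

theorem rep_of_mem_span_inl
    (hneg : ∀ i j, ⁅b (.inl i), b (.inl j)⁆ ∈ Submodule.span R (Set.range (b ∘ .inl)))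
    {η : L} (hη : η ∈ Submodule.span R (Set.range (b ∘ .inl))) (v : InducedModule b) :
    rep b hneg η v = negPart b η • v := by
  let p : Submodule R (InducedModule b) :=
    ⨅ η : Submodule.span R (Set.range (b ∘ .inl)),
      LinearMap.eqLocus (rep b hneg η) (Algebra.lsmul R R _ (negPart b η))
  suffices p = ⊤ by
    simpa [p] using (Submodule.mem_iInf _).1 (this ▸ Submodule.mem_top : v ∈ p) ⟨η, hη⟩
  refine InducedModule.eq_top_of_vacuum_mem b ?_ fun i v hv => ?_
  · simp [p, rep_vacuum]
  · simp only [p, Submodule.mem_iInf, LinearMap.mem_eqLocus, Algebra.lsmul_coe] at hv ⊢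
    intro η
    rw [rep_ι_smul, hv, hv ⟨_, lie_inl_mem_span_inl hneg i η.2⟩, ← mul_smul,
      ι_mul_negPart_smul i η.2, mul_smul, add_sub_cancel_right]

theorem rep_inl
    (hneg : ∀ i j, ⁅b (.inl i), b (.inl j)⁆ ∈ Submodule.span R (Set.range (b ∘ .inl)))
    (i : I) (v : InducedModule b) : rep b hneg (b (.inl i)) v = FreeAlgebra.ι R i • v := by
  simpa using rep_of_mem_span_inl hneg (Submodule.subset_span ⟨i, rfl⟩) v

theorem rep_lie_vacuum
    (hneg : ∀ i j, ⁅b (.inl i), b (.inl j)⁆ ∈ Submodule.span R (Set.range (b ∘ .inl)))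
    (hpos : ∀ i j, ⁅b (.inr i), b (.inr j)⁆ ∈ Submodule.span R (Set.range (b ∘ .inr)))
    (ξ ζ : L) :
    rep b hneg ⁅ξ, ζ⁆ (vacuum b) =
      rep b hneg ξ (rep b hneg ζ (vacuum b)) - rep b hneg ζ (rep b hneg ξ (vacuum b)) := by
  let onVacuum := LinearMap.applyₗ (vacuum b) ∘ₗ rep b hneg
  let B := (rep b hneg).compl₂ onVacuum
  refine LinearMap.congr_fun₂ (LinearMap.ext_basis b b fun p q => ?_ :
    (LieAlgebra.ad R L : L →ₗ[R] Module.End R L).compr₂ onVacuum = B - B.flip) ξ ζ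
  simp only [LinearMap.compr₂_apply, LinearMap.sub_apply, LinearMap.flip_apply,
    LinearMap.compl₂_apply, LinearMap.coe_comp, Function.comp_apply,
    LinearMap.applyₗ_apply_apply, LieHom.coe_toLinearMap, LieAlgebra.ad_apply, B, onVacuum]
  rcases p with p | p <;> rcases q with q | q
  · have hrel := relator_smul p q (vacuum b)
    rw [relator, sub_smul, sub_smul, mul_smul, mul_smul, sub_eq_zero] at hrel
    rw [rep_inl, rep_inl, rep_inl, rep_inl, rep_vacuum, hrel]
  · rw [rep_inr_vacuum, map_zero, rep_inl, rep_ι_smul, rep_inr_vacuum]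
    simp
  · rw [rep_inr_vacuum, map_zero, rep_inl, rep_ι_smul, rep_inr_vacuum, ← lie_skew, map_neg]
    simp
  · rw [rep_inr_vacuum, rep_inr_vacuum, map_zero, map_zero, sub_zero, rep_vacuum,
      negPart_eq_zero_of_mem_span_inr (hpos p q), zero_smul]

theorem rep_lie
    (hneg : ∀ i j, ⁅b (.inl i), b (.inl j)⁆ ∈ Submodule.span R (Set.range (b ∘ .inl)))
    (hpos : ∀ i j, ⁅b (.inr i), b (.inr j)⁆ ∈ Submodule.span R (Set.range (b ∘ .inr)))
    (ξ ζ : L) :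
    rep b hneg ⁅ξ, ζ⁆ = rep b hneg ξ * rep b hneg ζ - rep b hneg ζ * rep b hneg ξ := by
  let p : Submodule R (InducedModule b) := ⨅ (ξ : L) (ζ : L),
    LinearMap.eqLocus (rep b hneg ⁅ξ, ζ⁆)
      (rep b hneg ξ * rep b hneg ζ - rep b hneg ζ * rep b hneg ξ)
  suffices hp : p = ⊤ by
    refine LinearMap.ext fun v => ?_
    have hv : v ∈ p := hp ▸ Submodule.mem_top
    exact (Submodule.mem_iInf _).1 ((Submodule.mem_iInf _).1 hv ξ) ζ
  refine InducedModule.eq_top_of_vacuum_mem b ?_ fun i v hv => ?_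
  · simp [p, rep_lie_vacuum hneg hpos]
  · simp only [p, Submodule.mem_iInf, LinearMap.mem_eqLocus, LinearMap.sub_apply,
      Module.End.mul_apply] at hv ⊢
    intro ξ ζ
    simp only [rep_ι_smul, map_sub]
    rw [hv ξ ζ, leibniz_lie, map_add, LinearMap.add_apply, hv _ ζ, hv ξ, smul_sub]
    abel

variable (b) in
noncomputable def repHom
    (hneg : ∀ i j, ⁅b (.inl i), b (.inl j)⁆ ∈ Submodule.span R (Set.range (b ∘ .inl)))
    (hpos : ∀ i j, ⁅b (.inr i), b (.inr j)⁆ ∈ Submodule.span R (Set.range (b ∘ .inr))) :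
    L →ₗ⁅R⁆ Module.End R (InducedModule b) :=
  { rep b hneg with map_lie' := fun {ξ ζ} => rep_lie hneg hpos ξ ζ }

variable (b) in
noncomputable def toEnveloping
    (hneg : ∀ i j, ⁅b (.inl i), b (.inl j)⁆ ∈ Submodule.span R (Set.range (b ∘ .inl))) :
    InducedModule b →ₗ[R] UniversalEnvelopingAlgebra R L :=
  liftInduced b (FreeAlgebra.lift R fun i => ι R (b (.inl i))).toLinearMap fun x hx => by
    induction hx using Submodule.span_induction with
    | mem x hx =>
      obtain ⟨i, j, c, rfl⟩ := hx
      rw [AlgHom.toLinearMap_apply, map_mul, relator, map_sub, map_sub, map_mul, map_mul,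
        FreeAlgebra.lift_ι_apply, FreeAlgebra.lift_ι_apply, lift_negPart (hneg i j), ι_mul_ι,
        add_sub_cancel_left, sub_self, zero_mul]
    | zero => simp
    | add x y _ _ hx hy => rw [map_add, hx, hy, add_zero]
    | smul a x _ hx => simp_all

theorem toEnveloping_smul
    (hneg : ∀ i j, ⁅b (.inl i), b (.inl j)⁆ ∈ Submodule.span R (Set.range (b ∘ .inl)))
    (z : FreeAlgebra R I) (v : InducedModule b) :
    toEnveloping b hneg (z • v) =
      FreeAlgebra.lift R (fun i => ι R (b (.inl i))) z * toEnveloping b hneg v := by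
  induction v using Submodule.Quotient.induction_on with | _ x
  rw [← Submodule.Quotient.mk_smul, smul_eq_mul]
  exact map_mul (FreeAlgebra.lift R fun i => ι R (b (.inl i))) z x

theorem lift_repHom_vacuum_eq_zero
    (hneg : ∀ i j, ⁅b (.inl i), b (.inl j)⁆ ∈ Submodule.span R (Set.range (b ∘ .inl)))
    (hpos : ∀ i j, ⁅b (.inr i), b (.inr j)⁆ ∈ Submodule.span R (Set.range (b ∘ .inr)))
    {u : UniversalEnvelopingAlgebra R L}
    (hu : u ∈ Submodule.span (UniversalEnvelopingAlgebra R L) (ι R '' Set.range (b ∘ .inr))) :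
    lift R (repHom b hneg hpos) u (vacuum b) = 0 := by
  induction hu using Submodule.span_induction with
  | mem u hu =>
    obtain ⟨_, ⟨j, rfl⟩, rfl⟩ := hu
    rw [lift_ι_apply]
    exact rep_inr_vacuum hneg j
  | zero => rw [map_zero, LinearMap.zero_apply]
  | add u w _ _ hu hw => rw [map_add, LinearMap.add_apply, hu, hw, add_zero]
  | smul a u _ hu => rw [smul_eq_mul, map_mul, Module.End.mul_apply, hu, map_zero]

theorem toEnveloping_lift_repHom
    (hneg : ∀ i j, ⁅b (.inl i), b (.inl j)⁆ ∈ Submodule.span R (Set.range (b ∘ .inl)))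
    (hpos : ∀ i j, ⁅b (.inr i), b (.inr j)⁆ ∈ Submodule.span R (Set.range (b ∘ .inr)))
    {a : UniversalEnvelopingAlgebra R L} (ha : a ∈ Algebra.adjoin R (ι R '' Set.range (b ∘ .inl)))
    (v : InducedModule b) :
    toEnveloping b hneg (lift R (repHom b hneg hpos) a v) = a * toEnveloping b hneg v := by
  induction ha using Algebra.adjoin_induction generalizing v with
  | mem a ha =>
    obtain ⟨_, ⟨i, rfl⟩, rfl⟩ := ha
    rw [lift_ι_apply]
    exact (congr_arg _ (rep_inl hneg i v)).trans (by
      rw [toEnveloping_smul, FreeAlgebra.lift_ι_apply]; rfl)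
  | algebraMap r =>
    rw [AlgHom.commutes, Module.algebraMap_end_apply, map_smul, Algebra.smul_def]
  | add a a' _ _ ha ha' => rw [map_add, LinearMap.add_apply, map_add, ha, ha', add_mul]
  | mul a a' _ _ ha ha' => rw [map_mul, Module.End.mul_apply, ha, ha', mul_assoc]

theorem disjoint_adjoin_span
    (hneg : ∀ i j, ⁅b (.inl i), b (.inl j)⁆ ∈ Submodule.span R (Set.range (b ∘ .inl)))
    (hpos : ∀ i j, ⁅b (.inr i), b (.inr j)⁆ ∈ Submodule.span R (Set.range (b ∘ .inr))) :
    Disjoint (Subalgebra.toSubmodule (Algebra.adjoin R (ι R '' Set.range (b ∘ .inl))))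
      ((Submodule.span (UniversalEnvelopingAlgebra R L)
        (ι R '' Set.range (b ∘ .inr))).restrictScalars R) := by
  refine Submodule.disjoint_def.2 fun a ha hP => ?_
  have h := toEnveloping_lift_repHom hneg hpos ha (vacuum b)
  have h1 : toEnveloping b hneg (vacuum b) = 1 :=
    map_one (FreeAlgebra.lift R fun i => ι R (b (.inl i)))
  rwa [lift_repHom_vacuum_eq_zero hneg hpos hP, map_zero, h1, mul_one, eq_comm] at h

theorem isCompl_adjoin_span
    (hneg : ∀ i j, ⁅b (.inl i), b (.inl j)⁆ ∈ Submodule.span R (Set.range (b ∘ .inl)))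
    (hpos : ∀ i j, ⁅b (.inr i), b (.inr j)⁆ ∈ Submodule.span R (Set.range (b ∘ .inr))) :
    IsCompl (Subalgebra.toSubmodule (Algebra.adjoin R (ι R '' Set.range (b ∘ .inl))))
      ((Submodule.span (UniversalEnvelopingAlgebra R L)
        (ι R '' Set.range (b ∘ .inr))).restrictScalars R) := by
  refine ⟨disjoint_adjoin_span hneg hpos, codisjoint_adjoin_span ?_⟩
  rw [← Set.Sum.elim_range, Sum.elim_comp_inl_inr, b.span_eq]

end UniversalEnvelopingAlgebra

end

namespace ADEContext

variable (ctx : ADEContext)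

abbrev NegIndex : Type := {p : {α // α ∈ ctx.Δ} × ℤ // p.2 ≤ -1}

abbrev PosIndex : Type := {p : {α // α ∈ ctx.Δ} × ℤ // ¬p.2 ≤ -1}

noncomputable def splitBasis : Module.Basis (ctx.NegIndex ⊕ ctx.PosIndex) ℂ ctx.nbar :=
  ctx.basis.reindex (Equiv.sumCompl fun p : {α // α ∈ ctx.Δ} × ℤ => p.2 ≤ -1).symm

theorem splitBasis_inl (p : ctx.NegIndex) : ctx.splitBasis (.inl p) = ctx.x p.1.1 p.1.2 := by
  simpa [splitBasis] using ctx.basis_eq p.1.1 p.1.2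

theorem splitBasis_inr (p : ctx.PosIndex) : ctx.splitBasis (.inr p) = ctx.x p.1.1 p.1.2 := by
  simpa [splitBasis] using ctx.basis_eq p.1.1 p.1.2

theorem lie_splitBasis_inl_mem (p q : ctx.NegIndex) :
    ⁅ctx.splitBasis (.inl p), ctx.splitBasis (.inl q)⁆ ∈
      Submodule.span ℂ (Set.range (ctx.splitBasis ∘ .inl)) := by
  rw [splitBasis_inl, splitBasis_inl, ctx.bracket_x _ p.1.1.2 _ q.1.1.2]
  split_ifs with h
  · refine Submodule.smul_mem _ _ (Submodule.subset_span ⟨⟨(⟨_, h⟩, p.1.2 + q.1.2), ?_⟩, ?_⟩)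
    · have := p.2; have := q.2; omega
    · simp [splitBasis_inl]
  · exact Submodule.zero_mem _

theorem lie_splitBasis_inr_mem (p q : ctx.PosIndex) :
    ⁅ctx.splitBasis (.inr p), ctx.splitBasis (.inr q)⁆ ∈
      Submodule.span ℂ (Set.range (ctx.splitBasis ∘ .inr)) := by
  rw [splitBasis_inr, splitBasis_inr, ctx.bracket_x _ p.1.1.2 _ q.1.1.2]
  split_ifs with h
  · refine Submodule.smul_mem _ _ (Submodule.subset_span ⟨⟨(⟨_, h⟩, p.1.2 + q.1.2), ?_⟩, ?_⟩)
    · have := p.2; have := q.2; omega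
    · simp [splitBasis_inr]
  · exact Submodule.zero_mem _

theorem image_range_splitBasis_inl :
    UniversalEnvelopingAlgebra.ι ℂ '' Set.range (ctx.splitBasis ∘ .inl) =
      {u : ctx.U | ∃ α ∈ ctx.Δ, ∃ m : ℤ, m ≤ -1 ∧ u = ctx.X α m} := by
  ext u
  constructor
  · rintro ⟨_, ⟨p, rfl⟩, rfl⟩
    exact ⟨p.1.1, p.1.1.2, p.1.2, p.2, by simp [splitBasis_inl, X]⟩
  · rintro ⟨α, hα, m, hm, rfl⟩
    exact ⟨_, ⟨⟨(⟨α, hα⟩, m), hm⟩, rfl⟩, by simp [splitBasis_inl, X]⟩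

theorem image_range_splitBasis_inr :
    UniversalEnvelopingAlgebra.ι ℂ '' Set.range (ctx.splitBasis ∘ .inr) =
      {u : ctx.U | ∃ α ∈ ctx.Δ, ∃ m : ℤ, 0 ≤ m ∧ u = ctx.X α m} := by
  ext u
  constructor
  · rintro ⟨_, ⟨p, rfl⟩, rfl⟩
    exact ⟨p.1.1, p.1.1.2, p.1.2, by have := p.2; omega, by simp [splitBasis_inr, X]⟩
  · rintro ⟨α, hα, m, hm, rfl⟩
    exact ⟨_, ⟨⟨(⟨α, hα⟩, m), by omega⟩, rfl⟩, by simp [splitBasis_inr, X]⟩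

theorem isCompl_adjoin_Uplus :
    IsCompl (Subalgebra.toSubmodule
        (Algebra.adjoin ℂ {u : ctx.U | ∃ α ∈ ctx.Δ, ∃ m : ℤ, m ≤ -1 ∧ u = ctx.X α m}))
      (ctx.Uplus.restrictScalars ℂ) := by
  have h := UniversalEnvelopingAlgebra.isCompl_adjoin_span ctx.lie_splitBasis_inl_mem
    ctx.lie_splitBasis_inr_mem
  rwa [image_range_splitBasis_inl, image_range_splitBasis_inr] at h

theorem one_le_sum_of_mem {α : Fin ctx.l → ℤ} (hα : α ∈ ctx.Δ) : 1 ≤ ∑ j, α j := by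
  obtain ⟨j, hj⟩ : ∃ j, α j ≠ 0 := by
    by_contra! h
    exact ctx.Δ_ne_zero α hα (funext h)
  calc 1 ≤ α j := by have := ctx.Δ_nonneg α hα j; omega
    _ ≤ ∑ k, α k := Finset.single_le_sum (fun k _ => ctx.Δ_nonneg α hα k) (Finset.mem_univ j)

theorem sroot_mem (j : Fin ctx.l) : ctx.sroot j ∈ ctx.Δ := ctx.simple_mem j

theorem X_mul_X_sub {α β : Fin ctx.l → ℤ} (hα : α ∈ ctx.Δ) (hβ : β ∈ ctx.Δ) (m n : ℤ) :
    ctx.X α m * ctx.X β n - ctx.X β n * ctx.X α m =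
      if α + β ∈ ctx.Δ then ctx.C α β • ctx.X (α + β) (m + n) else 0 := by
  rw [X, X, UniversalEnvelopingAlgebra.ι_mul_ι, add_sub_cancel_left, ctx.bracket_x α hα β hβ]
  split_ifs <;> simp [X]

theorem X_sroot_comm (j : Fin ctx.l) (m n : ℤ) :
    ctx.X (ctx.sroot j) m * ctx.X (ctx.sroot j) n =
      ctx.X (ctx.sroot j) n * ctx.X (ctx.sroot j) m := by
  have h := ctx.X_mul_X_sub (ctx.sroot_mem j) (ctx.sroot_mem j) m n
  have hnot : ctx.sroot j + ctx.sroot j ∉ ctx.Δ := fun h => ((ctx.sum_simple_mem_iff j j).1 h).1 rfl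
  rwa [if_neg hnot, sub_eq_zero] at h

theorem X_mem_Uplus {α : Fin ctx.l → ℤ} (hα : α ∈ ctx.Δ) {m : ℤ} (hm : 0 ≤ m) :
    ctx.X α m ∈ ctx.Uplus :=
  Submodule.subset_span ⟨α, hα, m, hm, rfl⟩

theorem Uplus_le_I0 : ctx.Uplus ≤ ctx.I0 := le_sup_right

theorem Uplus_le_Ii (i : Fin ctx.l) : ctx.Uplus ≤ ctx.Ii i :=
  ctx.Uplus_le_I0.trans le_sup_left

theorem Jideal_le_Ii (i : Fin ctx.l) : ctx.Jideal ≤ ctx.Ii i :=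
  le_sup_left.trans le_sup_left

theorem X_sroot_neg_one_mem_Ii (i : Fin ctx.l) : ctx.X (ctx.sroot i) (-1) ∈ ctx.Ii i :=
  Submodule.mem_sup_right (Submodule.subset_span rfl)

theorem X_sroot_mem_Ii (i j : Fin ctx.l) {m : ℤ} (hm : -ctx.sroot j i ≤ m) :
    ctx.X (ctx.sroot j) m ∈ ctx.Ii i := by
  rcases le_or_gt 0 m with hm0 | hm0
  · exact ctx.Uplus_le_Ii i (ctx.X_mem_Uplus (ctx.sroot_mem j) hm0)
  obtain rfl : j = i := by
    by_contra hji
    simp [sroot, Ne.symm hji] at hm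
    omega
  obtain rfl : m = -1 := by simp [sroot] at hm; omega
  exact ctx.X_sroot_neg_one_mem_Ii j

theorem X_mem_Ii (i : Fin ctx.l) {α : Fin ctx.l → ℤ} (hα : α ∈ ctx.Δ) {m : ℤ}
    (hm : -α i ≤ m) : ctx.X α m ∈ ctx.Ii i := by
  obtain ⟨n, hn⟩ : ∃ n : ℕ, ∑ j, α j ≤ n := ⟨(∑ j, α j).toNat, Int.self_le_toNat _⟩
  induction n generalizing α m with
  | zero => have := ctx.one_le_sum_of_mem hα; omega
  | succ n ih =>
    by_cases hsimple : ∃ j, α = ctx.sroot j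
    · obtain ⟨j, rfl⟩ := hsimple
      exact ctx.X_sroot_mem_Ii i j hm
    obtain ⟨β, hβ, j, rfl⟩ : ∃ β ∈ ctx.Δ, ∃ j, α = β + ctx.sroot j :=
      ctx.Δ_decomp α hα fun j h => hsimple ⟨j, h⟩
    have hsum : ∑ k, (β + ctx.sroot j) k = ∑ k, β k + 1 := by
      simp [Finset.sum_add_distrib, sroot]
    have hβj : (β + ctx.sroot j) i = β i + ctx.sroot j i := rfl
    have hd : 0 ≤ ctx.sroot j i := ctx.Δ_nonneg _ (ctx.sroot_mem j) i
    -- split `m = m₁ + m₂` with `m₁ ≥ -β i` and `m₂ ≥ -(α_j) i`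
    have hXβ : ctx.X β (max m (-β i)) ∈ ctx.Ii i := ih hβ (le_max_right _ _) (by omega)
    have hXj : ctx.X (ctx.sroot j) (m - max m (-β i)) ∈ ctx.Ii i :=
      ctx.X_sroot_mem_Ii i j (by omega)
    have hcomm := ctx.X_mul_X_sub hβ (ctx.sroot_mem j) (max m (-β i)) (m - max m (-β i))
    rw [if_pos hα, add_sub_cancel] at hcomm
    rw [← inv_smul_smul₀ (ctx.C_ne_zero β hβ _ (ctx.sroot_mem j) hα) (ctx.X _ m), ← hcomm]
    exact Submodule.smul_of_tower_mem _ _ (Submodule.sub_mem _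
      ((ctx.Ii i).smul_mem _ hXj) ((ctx.Ii i).smul_mem _ hXβ))

theorem R_add_two (j : Fin ctx.l) {t : ℤ} (ht : 1 ≤ t) :
    ctx.R j (t + 2) = ctx.X (ctx.sroot j) (-1 - t) * ctx.X (ctx.sroot j) (-1) +
      ctx.X (ctx.sroot j) (-1) * ctx.X (ctx.sroot j) (-1 - t) +
      ∑ m ∈ Finset.Icc (1 - t) (-1),
        ctx.X (ctx.sroot j) (m - 1) * ctx.X (ctx.sroot j) (-t - m - 1) := by
  have hIcc : Finset.Icc (1 - (t + 2)) (-1) = insert (-1 - t) (insert (-1)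
      ((Finset.Icc (1 - t) (-1)).map (Equiv.subRight 1).toEmbedding)) := by
    ext m; simp; omega
  rw [R, hIcc, Finset.sum_insert (by simp; omega), Finset.sum_insert (by simp),
    Finset.sum_map, add_assoc]
  congr 3 <;> (try funext m) <;>
    (try simp only [Equiv.coe_toEmbedding, Equiv.subRight_apply]) <;> ring_nf

theorem tau_R_mem_Ii (i : Fin ctx.l) (νu : Fin ctx.l → ℂˣ) (τ : ctx.U ≃ₐ[ℂ] ctx.U)
    (hτ : ∀ α ∈ ctx.Δ, ∀ m : ℤ, τ (ctx.X α m) = ctx.charVal νu α • ctx.X α (m - α i))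
    (j : Fin ctx.l) {t : ℤ} (ht : 2 ≤ t) : τ (ctx.R j t) ∈ ctx.Ii i := by
  have hτR : τ (ctx.R j t) = (ctx.charVal νu (ctx.sroot j) * ctx.charVal νu (ctx.sroot j)) •
      ∑ m ∈ Finset.Icc (1 - t) (-1), ctx.X (ctx.sroot j) (m - ctx.sroot j i) *
        ctx.X (ctx.sroot j) (-t - m - ctx.sroot j i) := by
    simp only [R, map_sum, map_mul, hτ _ (ctx.sroot_mem j), smul_mul_smul_comm, Finset.smul_sum]
  rw [hτR]
  refine Submodule.smul_of_tower_mem _ _ ?_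
  by_cases hij : j = i
  · subst hij
    have hX : ctx.X (ctx.sroot j) (-1) ∈ ctx.Ii j := ctx.X_sroot_neg_one_mem_Ii j
    rw [show ctx.sroot j j = 1 from Pi.single_eq_same j 1,
      ← sub_eq_iff_eq_add'.2 (ctx.R_add_two j (by omega : 1 ≤ t))]
    refine Submodule.sub_mem _
      (ctx.Jideal_le_Ii j (Submodule.subset_span ⟨j, t + 2, by omega, rfl⟩))
      (Submodule.add_mem _ ((ctx.Ii j).smul_mem _ hX) ?_)
    rw [ctx.X_sroot_comm]
    exact (ctx.Ii j).smul_mem _ hX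
  · rw [show ctx.sroot j i = 0 from Pi.single_eq_of_ne (Ne.symm hij) 1]
    simp only [sub_zero]
    exact ctx.Jideal_le_Ii i (Submodule.subset_span ⟨j, t, ht, rfl⟩)

theorem I0_le_comap_Ii (i : Fin ctx.l) (νu : Fin ctx.l → ℂˣ) (τ : ctx.U ≃ₐ[ℂ] ctx.U)
    (hτ : ∀ α ∈ ctx.Δ, ∀ m : ℤ, τ (ctx.X α m) = ctx.charVal νu α • ctx.X α (m - α i)) :
    ctx.I0 ≤ Ideal.comap τ (ctx.Ii i) := by
  refine sup_le (Submodule.span_le.2 ?_) (Submodule.span_le.2 ?_)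
  · rintro _ ⟨j, t, ht, rfl⟩
    exact ctx.tau_R_mem_Ii i νu τ hτ j ht
  · rintro _ ⟨α, hα, m, hm, rfl⟩
    rw [SetLike.mem_coe, Ideal.mem_comap, hτ α hα m]
    exact Submodule.smul_of_tower_mem _ _ (ctx.X_mem_Ii i hα (by omega))

end ADEContext

/-- (Corollary 3.4)  Let `W^N = U(𝔫̄)/U(𝔫̄)𝔫̄₊`, a left `U(𝔫̄)`-module, and let
`v = 1 + U(𝔫̄)𝔫̄₊ ∈ W^N` (the principal subspace of the generalized Verma module).  Then for
every `i = 1, …, l` and every character `ν : Q → ℂ^×` (determined by its values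
`νu j = ν(α_j)`), there is a unique `ℂ`-linear map `ê : W^N → W^N` such that
`ê(a · v) = τ_{λ_i,ν}(a) · v` for all `a ∈ U(𝔫̄₋)` (the subalgebra of `U(𝔫̄)` generated by
the negative modes `x_α(m)`, `m ≤ -1`, i.e. the canonical image of `U(𝔫̄₋)`), and this map
satisfies `ê(I_{λ_0} · v) ⊆ I_{λ_i} · v`.  Here `τ` is the extension to `U(𝔫̄)` of
`τ_{λ_i,ν}`, acting on generators by `x_α(m) ↦ ν(α) x_α(m - α^i)`. -/
theorem exists_unique_lifted_map_ehat (ctx : ADEContext) (i : Fin ctx.l)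
    (νu : Fin ctx.l → ℂˣ) (τ : ctx.U ≃ₐ[ℂ] ctx.U)
    (hτ : ∀ α ∈ ctx.Δ, ∀ m : ℤ,
      τ (ctx.X α m) = ctx.charVal νu α • ctx.X α (m - α i)) :
    ∃ e : (ctx.U ⧸ ctx.Uplus) →ₗ[ℂ] (ctx.U ⧸ ctx.Uplus),
      ((∀ a ∈ Algebra.adjoin ℂ {u : ctx.U | ∃ α ∈ ctx.Δ, ∃ m : ℤ, m ≤ -1 ∧ u = ctx.X α m},
          e (a • (Submodule.Quotient.mk (1 : ctx.U) : ctx.U ⧸ ctx.Uplus)) =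
            τ a • (Submodule.Quotient.mk (1 : ctx.U) : ctx.U ⧸ ctx.Uplus)) ∧
       ∀ u ∈ ctx.I0,
          e (Submodule.Quotient.mk u) ∈ Submodule.map ctx.Uplus.mkQ (ctx.Ii i)) ∧
      ∀ e' : (ctx.U ⧸ ctx.Uplus) →ₗ[ℂ] (ctx.U ⧸ ctx.Uplus),
        (∀ a ∈ Algebra.adjoin ℂ {u : ctx.U | ∃ α ∈ ctx.Δ, ∃ m : ℤ, m ≤ -1 ∧ u = ctx.X α m},
          e' (a • (Submodule.Quotient.mk (1 : ctx.U) : ctx.U ⧸ ctx.Uplus)) =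
            τ a • (Submodule.Quotient.mk (1 : ctx.U) : ctx.U ⧸ ctx.Uplus)) →
        e' = e := by
  have hc := ctx.isCompl_adjoin_Uplus
  have hv (a : ctx.U) :
      a • (Submodule.Quotient.mk 1 : ctx.U ⧸ ctx.Uplus) = Submodule.Quotient.mk a := by
    rw [← Submodule.Quotient.mk_smul, smul_eq_mul, mul_one]
  let f : ctx.U →ₗ[ℂ] ctx.U ⧸ ctx.Uplus := ctx.Uplus.mkQ.restrictScalars ℂ ∘ₗ τ.toLinearMap
  refine ⟨Submodule.liftQOfIsCompl hc f, ⟨fun a ha => ?_, fun u hu => ?_⟩, fun e' he' => ?_⟩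
  · rw [hv, hv, Submodule.liftQOfIsCompl_mk_of_mem hc f ha]
    rfl
  · have hproj : Submodule.projection _ _ hc u ∈ ctx.I0 := by
      simpa using ctx.I0.sub_mem hu (ctx.Uplus_le_I0 (Submodule.sub_projection_mem hc u))
    exact ⟨_, ctx.I0_le_comap_Ii i νu τ hτ hproj, rfl⟩
  · refine Submodule.quotient_ext_of_codisjoint hc.codisjoint fun a ha => ?_
    have h := he' a ha
    rw [hv, hv] at h
    rw [h, Submodule.liftQOfIsCompl_mk_of_mem hc f ha]
    rfl
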